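/- arXiv:2106.10200 — 2 statements merged into one kernel-verified Lean document; each statement's English description precedes it below -/
import Mathlib

section
/- Lower bound of the stability factor by the distance of MDE solutions: Let M₁, M₂ be N×N complex matrices. Then the algebraic identity Re[1 − ⟨M₁M₂*⟩] = ½⟨(M₁ − M₂)(M₁ − M₂)*⟩ + ½(2 − ⟨M₁M₁*⟩ − ⟨M₂M₂*⟩) holds. If moreover M_r = M^{x_r}(z_r) solve Matrix Dyson Equations −M^{-1} = z_r − B − x_rA + ⟨M⟩ with positive-definite imaginary part and Im z_r > 0 (r = 1, 2), then ⟨M_rM_r*⟩ ≤ 1 and consequently |1 − ⟨M₁M₂*⟩| ≥ Re[1 − ⟨M₁M₂*⟩] ≥ ½⟨(M₁ − M₂)(M₁ − M₂)*⟩. -/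
open MeasureTheory Matrix Polynomial Filter ProbabilityTheory
open scoped BigOperators ComplexOrder

noncomputable section

/-- Normalized trace `⟨R⟩ = N⁻¹ Tr R`. -/
def ntr (N : ℕ) (R : Matrix (Fin N) (Fin N) ℂ) : ℂ := (N : ℂ)⁻¹ * R.trace

/-- Imaginary part of a matrix, `Im M = (M - M*)/(2i)`. -/
def imP (N : ℕ) (M : Matrix (Fin N) (Fin N) ℂ) : Matrix (Fin N) (Fin N) ℂ :=
  (2 * Complex.I)⁻¹ • (M - Mᴴ)

/-!
The identity is polarization of `⟨(M₁ - M₂)(M₁ - M₂)*⟩`. For a solution of the MDE, the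
resolvent identity `M - M* = M (M⁻¹* - M⁻¹) M*` and the Hermiticity of `B` and `A` give
`Im M = (Im z + Im ⟨M⟩) M M*`. Taking normalized traces, `Im ⟨M⟩ = (Im z + Im ⟨M⟩) ⟨MM*⟩`, and
since `Im ⟨M⟩ ≥ 0` by positivity of `Im M` while `Im z > 0`, this forces `⟨MM*⟩ < 1`.
-/

section NormalizedTrace

variable {N : ℕ}

lemma ntr_sub (R S : Matrix (Fin N) (Fin N) ℂ) : ntr N (R - S) = ntr N R - ntr N S := by
  simp only [ntr, trace_sub, mul_sub]

lemma ntr_smul (c : ℂ) (R : Matrix (Fin N) (Fin N) ℂ) : ntr N (c • R) = c * ntr N R := by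
  simp only [ntr, trace_smul, smul_eq_mul]
  ring

lemma ntr_conjTranspose (R : Matrix (Fin N) (Fin N) ℂ) : ntr N Rᴴ = star (ntr N R) := by
  simp only [ntr, trace_conjTranspose, star_mul', star_inv₀, star_natCast]

lemma ntr_imP (M : Matrix (Fin N) (Fin N) ℂ) : ntr N (imP N M) = (ntr N M).im := by
  rw [imP, ntr_smul, ntr_sub, ntr_conjTranspose, Complex.star_def, Complex.sub_conj]
  field_simp
  push_cast
  ring

lemma ntr_nonneg_of_posSemidef {R : Matrix (Fin N) (Fin N) ℂ} (hR : R.PosSemidef) :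
    0 ≤ ntr N R :=
  mul_nonneg (by simp) hR.trace_nonneg

lemma re_ntr_mul_conjTranspose_comm (M₁ M₂ : Matrix (Fin N) (Fin N) ℂ) :
    (ntr N (M₂ * M₁ᴴ)).re = (ntr N (M₁ * M₂ᴴ)).re := by
  rw [← conjTranspose_conjTranspose M₂, ← conjTranspose_mul, ntr_conjTranspose,
    conjTranspose_conjTranspose]
  rfl

lemma re_one_sub_ntr_mul_conjTranspose (M₁ M₂ : Matrix (Fin N) (Fin N) ℂ) :
    ((1 : ℂ) - ntr N (M₁ * M₂ᴴ)).re
      = (1 / 2) * (ntr N ((M₁ - M₂) * (M₁ - M₂)ᴴ)).re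
        + (1 / 2) * (2 - (ntr N (M₁ * M₁ᴴ)).re - (ntr N (M₂ * M₂ᴴ)).re) := by
  have hexpand : ntr N ((M₁ - M₂) * (M₁ - M₂)ᴴ)
      = ntr N (M₁ * M₁ᴴ) - ntr N (M₁ * M₂ᴴ) - ntr N (M₂ * M₁ᴴ) + ntr N (M₂ * M₂ᴴ) := by
    simp only [ntr, conjTranspose_sub, Matrix.sub_mul, Matrix.mul_sub, trace_sub]
    ring
  have hre := congrArg Complex.re hexpand
  simp only [Complex.add_re, Complex.sub_re] at hre
  rw [re_ntr_mul_conjTranspose_comm M₁ M₂] at hre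
  simp only [Complex.sub_re, Complex.one_re]
  linarith

end NormalizedTrace

lemma isUnit_det_of_posDef_imP {N : ℕ} {M : Matrix (Fin N) (Fin N) ℂ} (hM : (imP N M).PosDef) :
    IsUnit M.det := by
  rw [isUnit_iff_ne_zero]
  intro hdet
  obtain ⟨v, hv, hMv⟩ := exists_mulVec_eq_zero_iff.mpr hdet
  have hstar : star v ⬝ᵥ (Mᴴ *ᵥ v) = 0 := by
    rw [dotProduct_mulVec, ← star_mulVec, hMv, star_zero, zero_dotProduct]
  have hzero : star v ⬝ᵥ (imP N M *ᵥ v) = 0 := by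
    simp only [imP, smul_mulVec, sub_mulVec, dotProduct_smul, dotProduct_sub, hMv, hstar,
      dotProduct_zero, sub_zero, smul_zero]
  exact (hM.dotProduct_mulVec_pos hv).ne' hzero

lemma sub_conjTranspose_eq_smul_mul_conjTranspose {n : Type*} [Fintype n] [DecidableEq n]
    {M : Matrix n n ℂ} (hM : IsUnit M.det) {c : ℂ} (h : (M⁻¹)ᴴ - M⁻¹ = c • 1) :
    M - Mᴴ = c • (M * Mᴴ) := by
  have hMH : IsUnit Mᴴ.det := by
    rw [det_conjTranspose]
    exact hM.star
  calc M - Mᴴ = M * ((M⁻¹)ᴴ - M⁻¹) * Mᴴ := by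
        rw [Matrix.mul_sub, Matrix.sub_mul, conjTranspose_nonsing_inv, mul_nonsing_inv M hM,
          nonsing_inv_mul_cancel_right Mᴴ M hMH, Matrix.one_mul]
    _ = c • (M * Mᴴ) := by
        rw [h, Matrix.mul_smul, Matrix.mul_one, Matrix.smul_mul]

section MatrixDysonEquation

variable {N : ℕ} {M B A : Matrix (Fin N) (Fin N) ℂ} {x : ℝ} {z : ℂ}

lemma conjTranspose_inv_sub_inv_of_mde (hB : B.IsHermitian) (hA : A.IsHermitian)
    (hmde : -M⁻¹ = z • (1 : Matrix (Fin N) (Fin N) ℂ) - B - x • A + ntr N M • 1) :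
    (M⁻¹)ᴴ - M⁻¹ = ((z - star z) + (ntr N M - star (ntr N M))) • 1 := by
  rw [← neg_neg M⁻¹, hmde]
  simp only [conjTranspose_neg, conjTranspose_sub, conjTranspose_add, conjTranspose_smul,
    conjTranspose_one, hB.eq, hA.eq, star_trivial, add_smul, sub_smul]
  abel

lemma imP_eq_smul_mul_conjTranspose_of_mde (hB : B.IsHermitian) (hA : A.IsHermitian)
    (hmde : -M⁻¹ = z • (1 : Matrix (Fin N) (Fin N) ℂ) - B - x • A + ntr N M • 1)
    (hM : (imP N M).PosDef) :
    imP N M = ((z.im + (ntr N M).im : ℝ) : ℂ) • (M * Mᴴ) := by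
  have hward := sub_conjTranspose_eq_smul_mul_conjTranspose (isUnit_det_of_posDef_imP hM)
    (conjTranspose_inv_sub_inv_of_mde hB hA hmde)
  rw [imP, hward, Complex.star_def, Complex.sub_conj, Complex.sub_conj, smul_smul]
  congr 1
  field_simp
  push_cast
  ring

lemma re_ntr_mul_conjTranspose_lt_one_of_mde (hB : B.IsHermitian) (hA : A.IsHermitian)
    (hz : 0 < z.im)
    (hmde : -M⁻¹ = z • (1 : Matrix (Fin N) (Fin N) ℂ) - B - x • A + ntr N M • 1)
    (hM : (imP N M).PosDef) :
    (ntr N (M * Mᴴ)).re < 1 := by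
  have htrace := congrArg (ntr N) (imP_eq_smul_mul_conjTranspose_of_mde hB hA hmde hM)
  rw [ntr_imP, ntr_smul] at htrace
  have hre := congrArg Complex.re htrace
  simp only [Complex.ofReal_re, Complex.re_ofReal_mul] at hre
  have him_nonneg : 0 ≤ (ntr N M).im := by
    have := ntr_nonneg_of_posSemidef hM.posSemidef
    rw [ntr_imP] at this
    exact_mod_cast this
  nlinarith

end MatrixDysonEquation

theorem stability_lower_bound_by_distance_general
    (N : ℕ) (M₁ M₂ : Matrix (Fin N) (Fin N) ℂ) :
    ((1 : ℂ) - ntr N (M₁ * M₂ᴴ)).re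
      = (1 / 2) * (ntr N ((M₁ - M₂) * (M₁ - M₂)ᴴ)).re
        + (1 / 2) * (2 - (ntr N (M₁ * M₁ᴴ)).re - (ntr N (M₂ * M₂ᴴ)).re) ∧
    (∀ (B A : Matrix (Fin N) (Fin N) ℂ), B.IsHermitian → A.IsHermitian →
      ∀ (x₁ x₂ : ℝ) (z₁ z₂ : ℂ), 0 < z₁.im → 0 < z₂.im →
      (-M₁⁻¹ = z₁ • (1 : Matrix (Fin N) (Fin N) ℂ) - B - x₁ • A
          + ntr N M₁ • (1 : Matrix (Fin N) (Fin N) ℂ)) →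
      (imP N M₁).PosDef →
      (-M₂⁻¹ = z₂ • (1 : Matrix (Fin N) (Fin N) ℂ) - B - x₂ • A
          + ntr N M₂ • (1 : Matrix (Fin N) (Fin N) ℂ)) →
      (imP N M₂).PosDef →
      (ntr N (M₁ * M₁ᴴ)).re ≤ 1 ∧ (ntr N (M₂ * M₂ᴴ)).re ≤ 1 ∧
      ((1 : ℂ) - ntr N (M₁ * M₂ᴴ)).re ≤ ‖(1 : ℂ) - ntr N (M₁ * M₂ᴴ)‖ ∧
      (1 / 2) * (ntr N ((M₁ - M₂) * (M₁ - M₂)ᴴ)).re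
        ≤ ((1 : ℂ) - ntr N (M₁ * M₂ᴴ)).re) := by
  have hpolar := re_one_sub_ntr_mul_conjTranspose M₁ M₂
  refine ⟨hpolar, fun B A hB hA x₁ x₂ z₁ z₂ hz₁ hz₂ hmde₁ hM₁ hmde₂ hM₂ => ?_⟩
  have h₁ := (re_ntr_mul_conjTranspose_lt_one_of_mde hB hA hz₁ hmde₁ hM₁).le
  have h₂ := (re_ntr_mul_conjTranspose_lt_one_of_mde hB hA hz₂ hmde₂ hM₂).le
  exact ⟨h₁, h₂, Complex.re_le_norm _, by linarith⟩

/-- **Lower bound of the stability factor by the distance of MDE solutions.**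
For any `N×N` complex matrices `M₁, M₂` the algebraic identity
`Re[1 - ⟨M₁M₂*⟩] = ½⟨(M₁ - M₂)(M₁ - M₂)*⟩ + ½(2 - ⟨M₁M₁*⟩ - ⟨M₂M₂*⟩)` holds.
If moreover `M_r` solve Matrix Dyson Equations with positive definite imaginary
parts at spectral parameters `z_r` with `Im z_r > 0`, then `⟨M_r M_r*⟩ ≤ 1` and
`|1 - ⟨M₁M₂*⟩| ≥ Re[1 - ⟨M₁M₂*⟩] ≥ ½⟨(M₁ - M₂)(M₁ - M₂)*⟩`. -/
theorem stability_lower_bound_by_distance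
    (N : ℕ) (hN : 1 ≤ N) (M₁ M₂ : Matrix (Fin N) (Fin N) ℂ) :
    ((1 : ℂ) - ntr N (M₁ * M₂ᴴ)).re
      = (1 / 2) * (ntr N ((M₁ - M₂) * (M₁ - M₂)ᴴ)).re
        + (1 / 2) * (2 - (ntr N (M₁ * M₁ᴴ)).re - (ntr N (M₂ * M₂ᴴ)).re) ∧
    (∀ (B A : Matrix (Fin N) (Fin N) ℂ), B.IsHermitian → A.IsHermitian →
      ∀ (x₁ x₂ : ℝ) (z₁ z₂ : ℂ), 0 < z₁.im → 0 < z₂.im →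
      (-M₁⁻¹ = z₁ • (1 : Matrix (Fin N) (Fin N) ℂ) - B - x₁ • A
          + ntr N M₁ • (1 : Matrix (Fin N) (Fin N) ℂ)) →
      (imP N M₁).PosDef →
      (-M₂⁻¹ = z₂ • (1 : Matrix (Fin N) (Fin N) ℂ) - B - x₂ • A
          + ntr N M₂ • (1 : Matrix (Fin N) (Fin N) ℂ)) →
      (imP N M₂).PosDef →
      (ntr N (M₁ * M₁ᴴ)).re ≤ 1 ∧ (ntr N (M₂ * M₂ᴴ)).re ≤ 1 ∧
      ((1 : ℂ) - ntr N (M₁ * M₂ᴴ)).re ≤ ‖(1 : ℂ) - ntr N (M₁ * M₂ᴴ)‖ ∧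
      (1 / 2) * (ntr N ((M₁ - M₂) * (M₁ - M₂)ᴴ)).re
        ≤ ((1 : ℂ) - ntr N (M₁ * M₂ᴴ)).re) :=
  stability_lower_bound_by_distance_general N M₁ M₂

end
end

section
/- Self-consistent equation for a product of two resolvents (identities preceding eq. (5.9)): Let W, B, A be N×N matrices with B, A Hermitian deterministic and W Hermitian, let x₁, x₂ ∈ ℝ, z₁, z₂ ∈ ℂ∖ℝ, set H^{x_r} := W + B + x_r A, G_r := (H^{x_r} − z_r)^{-1}, and let M_r := M^{x_r}(z_r) be the MDE solutions; assume ⟨M₁M₂⟩ ≠ 1 and set M₁₂ := M₁M₂/(1 − ⟨M₁M₂⟩). Define the renormalized product W G₁G₂ (underlined) := W G₁G₂ + ⟨G₁⟩G₁G₂ + ⟨G₁G₂⟩G₂ and Δ := −M₁ · (W G₁G₂ underlined) + M₁(G₂ − M₂) + M₁⟨G₁G₂⟩(G₂ − M₂) + M₁⟨G₁ − M₁⟩G₁G₂. Then the exact identity (1 − M₁M₂⟨·⟩)[G₁G₂ − M₁₂] = Δ holds, where (1 − M₁M₂⟨·⟩)[R] := R − M₁M₂⟨R⟩, and consequently for every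 N×N matrix R: ⟨G₁G₂R − M₁₂R⟩ = ⟨ΔR⟩ + ⟨M₁M₂R⟩⟨Δ⟩/(1 − ⟨M₁M₂⟩). -/
open MeasureTheory Matrix Polynomial Filter ProbabilityTheory
open scoped BigOperators ComplexOrder

noncomputable section

/-- **Self-consistent equation for a product of two resolvents.**
With `H^{x_r} = W + B + x_r A`, `G_r = (H^{x_r} - z_r)⁻¹` and `M_r` the MDE solutions
(`M_r⁻¹ = B + x_r A - z_r - ⟨M_r⟩`), `M₁₂ = M₁M₂/(1-⟨M₁M₂⟩)`, the renormalized product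
`W̲G₁G₂ = WG₁G₂ + ⟨G₁⟩G₁G₂ + ⟨G₁G₂⟩G₂` and
`Δ = -M₁·W̲G₁G₂ + M₁(G₂-M₂) + M₁⟨G₁G₂⟩(G₂-M₂) + M₁⟨G₁-M₁⟩G₁G₂`, the exact identity
`(1 - M₁M₂⟨·⟩)[G₁G₂ - M₁₂] = Δ` holds, and for every `R`:
`⟨G₁G₂R - M₁₂R⟩ = ⟨ΔR⟩ + ⟨M₁M₂R⟩⟨Δ⟩/(1-⟨M₁M₂⟩)`. -/
theorem two_resolvent_selfconsistent_identity
    (N : ℕ) (hN : 1 ≤ N)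
    (W B A : Matrix (Fin N) (Fin N) ℂ)
    (hW : W.IsHermitian) (hB : B.IsHermitian) (hA : A.IsHermitian)
    (x₁ x₂ : ℝ) (z₁ z₂ : ℂ) (hz₁ : z₁.im ≠ 0) (hz₂ : z₂.im ≠ 0)
    (G₁ G₂ M₁ M₂ : Matrix (Fin N) (Fin N) ℂ)
    -- `G_r` are the resolvents of `H^{x_r} = W + B + x_r A` at `z_r`
    (hG₁ : G₁ * (W + B + x₁ • A - z₁ • (1 : Matrix (Fin N) (Fin N) ℂ)) = 1)
    (hG₁' : (W + B + x₁ • A - z₁ • (1 : Matrix (Fin N) (Fin N) ℂ)) * G₁ = 1)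
    (hG₂ : G₂ * (W + B + x₂ • A - z₂ • (1 : Matrix (Fin N) (Fin N) ℂ)) = 1)
    (hG₂' : (W + B + x₂ • A - z₂ • (1 : Matrix (Fin N) (Fin N) ℂ)) * G₂ = 1)
    -- `M_r` solve the Matrix Dyson Equations: `M_r⁻¹ = B + x_r A - z_r - ⟨M_r⟩`
    (hM₁ : M₁ * (B + x₁ • A - z₁ • (1 : Matrix (Fin N) (Fin N) ℂ)
        - ntr N M₁ • (1 : Matrix (Fin N) (Fin N) ℂ)) = 1)
    (hM₁' : (B + x₁ • A - z₁ • (1 : Matrix (Fin N) (Fin N) ℂ)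
        - ntr N M₁ • (1 : Matrix (Fin N) (Fin N) ℂ)) * M₁ = 1)
    (hM₂ : M₂ * (B + x₂ • A - z₂ • (1 : Matrix (Fin N) (Fin N) ℂ)
        - ntr N M₂ • (1 : Matrix (Fin N) (Fin N) ℂ)) = 1)
    (hM₂' : (B + x₂ • A - z₂ • (1 : Matrix (Fin N) (Fin N) ℂ)
        - ntr N M₂ • (1 : Matrix (Fin N) (Fin N) ℂ)) * M₂ = 1)
    (hstab : ntr N (M₁ * M₂) ≠ 1)
    (M₁₂ : Matrix (Fin N) (Fin N) ℂ)
    (hM₁₂ : M₁₂ = ((1 : ℂ) - ntr N (M₁ * M₂))⁻¹ • (M₁ * M₂))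
    (Und : Matrix (Fin N) (Fin N) ℂ)
    (hUnd : Und = W * G₁ * G₂ + ntr N G₁ • (G₁ * G₂) + ntr N (G₁ * G₂) • G₂)
    (Δ : Matrix (Fin N) (Fin N) ℂ)
    (hΔ : Δ = -(M₁ * Und) + M₁ * (G₂ - M₂)
        + ntr N (G₁ * G₂) • (M₁ * (G₂ - M₂)) + ntr N (G₁ - M₁) • (M₁ * G₁ * G₂)) :
    ((G₁ * G₂ - M₁₂) - ntr N (G₁ * G₂ - M₁₂) • (M₁ * M₂) = Δ) ∧
    (∀ R : Matrix (Fin N) (Fin N) ℂ,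
      ntr N (G₁ * G₂ * R - M₁₂ * R)
        = ntr N (Δ * R) + ntr N (M₁ * M₂ * R) * ntr N Δ / ((1 : ℂ) - ntr N (M₁ * M₂))) := by
  have hm : (1 : ℂ) - ntr N (M₁ * M₂) ≠ 0 := sub_ne_zero.mpr (Ne.symm hstab)
  have ntr_sub : ∀ X Y : Matrix (Fin N) (Fin N) ℂ, ntr N (X - Y) = ntr N X - ntr N Y := by
    intro X Y; simp [ntr, Matrix.trace_sub, mul_sub]
  have ntr_add : ∀ X Y : Matrix (Fin N) (Fin N) ℂ, ntr N (X + Y) = ntr N X + ntr N Y := by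
    intro X Y; simp [ntr, Matrix.trace_add, mul_add]
  have ntr_smul : ∀ (c : ℂ) (X : Matrix (Fin N) (Fin N) ℂ), ntr N (c • X) = c * ntr N X := by
    intro c X; simp [ntr, Matrix.trace_smul]; ring
  -- consequence of the MDE for `M₁`
  have hS : M₁ * (B + x₁ • A - z₁ • (1 : Matrix (Fin N) (Fin N) ℂ)) = 1 + ntr N M₁ • M₁ := by
    have h := hM₁
    rw [mul_sub, Matrix.mul_smul, Matrix.mul_one, sub_eq_iff_eq_add] at h
    exact h
  have key : M₁ * W * G₁ = M₁ - G₁ - ntr N M₁ • (M₁ * G₁) := by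
    have e : W + B + x₁ • A - z₁ • (1 : Matrix (Fin N) (Fin N) ℂ)
        = W + (B + x₁ • A - z₁ • (1 : Matrix (Fin N) (Fin N) ℂ)) := by abel
    have e1 : M₁ * ((W + (B + x₁ • A - z₁ • (1 : Matrix (Fin N) (Fin N) ℂ))) * G₁) = M₁ := by
      rw [← e, hG₁', mul_one]
    have h2 : M₁ * W * G₁ + (G₁ + ntr N M₁ • (M₁ * G₁)) = M₁ := by
      calc M₁ * W * G₁ + (G₁ + ntr N M₁ • (M₁ * G₁))
          = (M₁ * W + (1 + ntr N M₁ • M₁)) * G₁ := by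
            simp [add_mul, Matrix.smul_mul, mul_assoc]
        _ = (M₁ * W + M₁ * (B + x₁ • A - z₁ • (1 : Matrix (Fin N) (Fin N) ℂ))) * G₁ := by
            rw [hS]
        _ = M₁ * ((W + (B + x₁ • A - z₁ • (1 : Matrix (Fin N) (Fin N) ℂ))) * G₁) := by
            rw [← mul_add, mul_assoc]
        _ = M₁ := e1
    rw [sub_sub, eq_sub_iff_add_eq]; exact h2
  -- the key algebraic identity for Δ
  have hΔeq : Δ = G₁ * G₂ - M₁ * M₂ - ntr N (G₁ * G₂) • (M₁ * M₂) := by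
    have e2 : M₁ * (W * (G₁ * G₂)) = M₁ * G₂ - G₁ * G₂ - ntr N M₁ • (M₁ * (G₁ * G₂)) := by
      calc M₁ * (W * (G₁ * G₂)) = (M₁ * W * G₁) * G₂ := by
            rw [← mul_assoc, ← mul_assoc]
        _ = (M₁ - G₁ - ntr N M₁ • (M₁ * G₁)) * G₂ := by rw [key]
        _ = M₁ * G₂ - G₁ * G₂ - ntr N M₁ • (M₁ * (G₁ * G₂)) := by
            simp [sub_mul, Matrix.smul_mul, mul_assoc]
    rw [hΔ, hUnd, ntr_sub]
    simp only [mul_add, mul_sub, add_mul, sub_mul, Matrix.mul_smul, Matrix.smul_mul,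
      mul_assoc, e2, smul_sub, sub_smul]
    module
  have part1 : (G₁ * G₂ - M₁₂) - ntr N (G₁ * G₂ - M₁₂) • (M₁ * M₂) = Δ := by
    rw [hΔeq, hM₁₂, ntr_sub, ntr_smul]
    match_scalars <;> field_simp <;> ring
  refine ⟨part1, ?_⟩
  have htr : ntr N (G₁ * G₂ - M₁₂) = ntr N Δ / ((1 : ℂ) - ntr N (M₁ * M₂)) := by
    have h := congrArg (ntr N) part1
    rw [ntr_sub, ntr_smul] at h
    field_simp
    linear_combination h
  intro R
  have hmat : G₁ * G₂ * R - M₁₂ * R = Δ * R + ntr N (G₁ * G₂ - M₁₂) • (M₁ * M₂ * R) := by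
    calc G₁ * G₂ * R - M₁₂ * R = (G₁ * G₂ - M₁₂) * R := by rw [sub_mul]
      _ = (Δ + ntr N (G₁ * G₂ - M₁₂) • (M₁ * M₂)) * R := by
          rw [← part1]; abel
      _ = Δ * R + ntr N (G₁ * G₂ - M₁₂) • (M₁ * M₂ * R) := by
          rw [add_mul, Matrix.smul_mul, mul_assoc]
  rw [hmat, ntr_add, ntr_smul, htr]
  ring

end
end
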